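/- arXiv:1101.4401 — 2 statements merged into one kernel-verified Lean document; each statement's English description precedes it below -/
import Mathlib

section
/- For every n > 2 there is a cake instance with n players and an envy-free partial connected division that gives each of the players 2, ..., n-1 exactly twice the utility they receive in any envy-free complete connected division, while players 1 and n receive at least as much as in any envy-free complete connected division. -/
/-!
Players `i < n - 1` (the paper's players `1, …, n - 1`, indexed from `0`) are uniform on a
window of radius `1 / (4n)` about `(i + 1) / n`; the last player is uniform on `[0, 1]`.

In a complete envy-free division everybody values her piece at least `1 / n`, while a window is
worth less than that to everybody but its owner, so no piece fits inside another player's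
window. Hence a window player's piece reaches her centre: otherwise the rest of her window,
worth more to her than her own piece, would be covered by a single other piece. So no centre
lies inside the last player's piece, which is therefore at most `1 / n` long; by her
envy-freeness so is every piece, and completeness forces all lengths to be exactly `1 / n`.
The pieces then tile `[0, 1]` along the grid of step `1 / n`, so each window player holds
exactly half of her window. Leaving the gaps between the windows unallocated lets every window
player but the first take her whole window.
-/

open MeasureTheory Set
open scoped ENNReal

/-- A connected division of the cake `[0,1]` among `n` players: each player gets an
open interval, the intervals are pairwise disjoint and contained in `[0,1]`. -/
structure ConnDiv (n : ℕ) where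
  pieces : Fin n → Set ℝ
  isInterval : ∀ i, ∃ a b : ℝ, pieces i = Set.Ioo a b
  subset : ∀ i, pieces i ⊆ Set.Icc (0:ℝ) 1
  disj : Pairwise fun i j => Disjoint (pieces i) (pieces j)

/-- A connected division is complete if the closures of the pieces cover `[0,1]`. -/
def ConnDiv.Complete {n : ℕ} (d : ConnDiv n) : Prop :=
  Set.Icc (0:ℝ) 1 ⊆ ⋃ i, closure (d.pieces i)

/-- Envy-freeness: every player weakly prefers her own piece. -/
def EnvyFree {n : ℕ} (v : Fin n → Measure ℝ) (d : ConnDiv n) : Prop :=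
  ∀ i j, v i (d.pieces j) ≤ v i (d.pieces i)

/-- Utilitarian welfare: sum of own-piece values. -/
noncomputable def util {n : ℕ} (v : Fin n → Measure ℝ) (d : ConnDiv n) : ℝ≥0∞ :=
  ∑ i, v i (d.pieces i)

/-- Egalitarian welfare: minimum own-piece value. -/
noncomputable def egal {n : ℕ} (v : Fin n → Measure ℝ) (d : ConnDiv n) : ℝ≥0∞ :=
  ⨅ i, v i (d.pieces i)

/-- The uniform measure of total mass `m` on the interval `(a,b)`. -/
noncomputable def unifOn (a b m : ℝ) : Measure ℝ :=
  ENNReal.ofReal (m / (b - a)) • volume.restrict (Set.Ioo a b)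

instance (a b m : ℝ) : NullSingletonClass (unifOn a b m) :=
  ⟨fun t => by simp [unifOn]⟩

theorem unifOn_apply (a b m : ℝ) (s : Set ℝ) :
    unifOn a b m s = ENNReal.ofReal (m / (b - a)) * volume (s ∩ Ioo a b) := by
  rw [unifOn, Measure.smul_apply, smul_eq_mul, Measure.restrict_apply' measurableSet_Ioo]

theorem unifOn_eq_zero_of_disjoint {a b m : ℝ} {s : Set ℝ} (h : Disjoint s (Ioo a b)) :
    unifOn a b m s = 0 := by
  rw [unifOn_apply, h.inter_eq, measure_empty, mul_zero]

theorem unifOn_of_subset {a b : ℝ} {s : Set ℝ} (hab : a < b) (h : Ioo a b ⊆ s) :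
    unifOn a b 1 s = 1 := by
  rw [unifOn_apply, inter_eq_right.2 h, Real.volume_Ioo, ← ENNReal.ofReal_mul (by positivity),
    one_div_mul_cancel (sub_pos.2 hab).ne', ENNReal.ofReal_one]

theorem unifOn_le_one {a b : ℝ} (hab : a < b) (s : Set ℝ) : unifOn a b 1 s ≤ 1 :=
  (measure_mono (subset_univ s)).trans (unifOn_of_subset hab (subset_univ _)).le

theorem unifOn_le_unifOn_iff {a b : ℝ} (hab : a < b) {s t : Set ℝ} :
    unifOn a b 1 s ≤ unifOn a b 1 t ↔ volume (s ∩ Ioo a b) ≤ volume (t ∩ Ioo a b) := by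
  rw [unifOn_apply, unifOn_apply]
  exact ENNReal.mul_le_mul_iff_right (by simpa using hab) ENNReal.ofReal_ne_top

theorem unifOn_eq_inv_two {c r : ℝ} (hr : 0 < r) {s : Set ℝ}
    (h : s ∩ Ioo (c - r) (c + r) = Ioo (c - r) c ∨ s ∩ Ioo (c - r) (c + r) = Ioo c (c + r)) :
    unifOn (c - r) (c + r) 1 s = 2⁻¹ := by
  have hvol : volume (s ∩ Ioo (c - r) (c + r)) = ENNReal.ofReal r := by
    rcases h with h | h <;> rw [h, Real.volume_Ioo] <;> ring_nf
  rw [unifOn_apply, hvol, ← ENNReal.ofReal_mul (by rw [add_sub_sub_cancel]; positivity),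
    show 1 / (c + r - (c - r)) * r = 2⁻¹ by field_simp [hr.ne']; ring]
  simp

theorem unifOn_zero_one_apply (s : Set ℝ) : unifOn 0 1 1 s = volume (s ∩ Ioo 0 1) := by
  simp [unifOn_apply]

theorem exists_succ_div_mem_Ioo {n : ℕ} (hn : 0 < n) {a b : ℝ} (ha : 0 ≤ a) (hb : b ≤ 1)
    (hab : 1 / n < b - a) : ∃ k : ℕ, k + 1 < n ∧ ((k : ℝ) + 1) / n ∈ Ioo a b := by
  have hn' : (0 : ℝ) < n := by exact_mod_cast hn
  refine ⟨⌊a * n⌋₊, ?_, ?_, ?_⟩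
  · have : ((⌊a * n⌋₊ : ℝ) + 1) / n < 1 := by
      rw [div_lt_iff₀ hn'] at hab ⊢
      linarith [Nat.floor_le (mul_nonneg ha hn'.le), mul_le_mul_of_nonneg_right hb hn'.le]
    exact_mod_cast (div_lt_one hn').1 this
  · rw [lt_div_iff₀ hn']
    exact Nat.lt_floor_add_one _
  · rw [div_lt_iff₀ hn'] at hab ⊢
    linarith [Nat.floor_le (mul_nonneg ha hn'.le)]

namespace ConnDiv

variable {n : ℕ} (x : ConnDiv n)

-- Both endpoints are junk when piece `i` is empty: then any `lo ≥ hi` fits.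
noncomputable def lo (i : Fin n) : ℝ := (x.isInterval i).choose

noncomputable def hi (i : Fin n) : ℝ := (x.isInterval i).choose_spec.choose

theorem pieces_eq (i : Fin n) : x.pieces i = Ioo (x.lo i) (x.hi i) :=
  (x.isInterval i).choose_spec.choose_spec

variable {x} {i j : Fin n}

theorem Icc_subset_Icc_zero_one (h : x.lo i < x.hi i) : Icc (x.lo i) (x.hi i) ⊆ Icc 0 1 := by
  rw [← closure_Ioo h.ne, ← x.pieces_eq]
  exact closure_minimal (x.subset i) isClosed_Icc

theorem zero_le_lo (h : x.lo i < x.hi i) : 0 ≤ x.lo i :=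
  ((Icc_subset_Icc_iff h.le).1 (Icc_subset_Icc_zero_one h)).1

theorem hi_le_one (h : x.lo i < x.hi i) : x.hi i ≤ 1 :=
  ((Icc_subset_Icc_iff h.le).1 (Icc_subset_Icc_zero_one h)).2

theorem hi_le_lo_or_hi_le_lo (hi : x.lo i < x.hi i) (hj : x.lo j < x.hi j) (hij : i ≠ j) :
    x.hi i ≤ x.lo j ∨ x.hi j ≤ x.lo i := by
  have : Disjoint (x.pieces i) (x.pieces j) := x.disj hij
  rw [x.pieces_eq, x.pieces_eq, Ioo_disjoint_Ioo, min_le_iff, le_max_iff, le_max_iff] at this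
  rcases this with (h | h) | (h | h)
  · exact absurd h hi.not_ge
  · exact .inl h
  · exact .inr h
  · exact absurd h hj.not_ge

theorem lt_hi_and_lo_lt_of_not_disjoint {u w : ℝ} (h : ¬ Disjoint (x.pieces j) (Ioo u w)) :
    u < x.hi j ∧ x.lo j < w := by
  rw [x.pieces_eq, Ioo_disjoint_Ioo, not_le, max_lt_iff, lt_min_iff, lt_min_iff] at h
  exact ⟨h.2.1, h.1.2⟩

theorem pieces_subset_Icc {u w : ℝ} (hu : u ≤ x.lo j) (hw : x.hi j ≤ w) :
    x.pieces j ⊆ Icc u w :=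
  x.pieces_eq j ▸ Ioo_subset_Icc_self.trans (Icc_subset_Icc hu hw)

/-- The pieces meeting `(x.hi i, w)` lie right of piece `i`; of two of them, the left one would
fit in `[x.hi i, w]`. -/
theorem exists_forall_ne_disjoint_Ioo_hi (hne : ∀ j, x.lo j < x.hi j) {w : ℝ}
    (htrap : ∀ j ≠ i, ¬ x.pieces j ⊆ Icc (x.hi i) w) :
    ∃ j₀, ∀ j ≠ j₀, Disjoint (x.pieces j) (Ioo (x.hi i) w) := by
  have right_of : ∀ j, ¬ Disjoint (x.pieces j) (Ioo (x.hi i) w) →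
      j ≠ i ∧ x.hi i ≤ x.lo j ∧ x.lo j < w := by
    intro j hj
    obtain ⟨h₁, h₂⟩ := lt_hi_and_lo_lt_of_not_disjoint hj
    have hji : j ≠ i := by
      rintro rfl
      exact hj (x.pieces_eq j ▸ Ioo_disjoint_Ioo.2 (by simp))
    refine ⟨hji, ?_, h₂⟩
    rcases hi_le_lo_or_hi_le_lo (hne j) (hne i) hji with h | h
    · linarith [hne i]
    · exact h
  by_contra! h
  obtain ⟨j, -, hj⟩ := h i
  obtain ⟨k, hkj, hk⟩ := h j
  obtain ⟨hji, hj₁, hj₂⟩ := right_of j hj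
  obtain ⟨hki, hk₁, hk₂⟩ := right_of k hk
  rcases hi_le_lo_or_hi_le_lo (hne j) (hne k) hkj.symm with hjk | hkj
  · exact htrap j hji (pieces_subset_Icc hj₁ (by linarith))
  · exact htrap k hki (pieces_subset_Icc hk₁ (by linarith))

theorem exists_forall_ne_disjoint_Ioo_lo (hne : ∀ j, x.lo j < x.hi j) {w : ℝ}
    (htrap : ∀ j ≠ i, ¬ x.pieces j ⊆ Icc w (x.lo i)) :
    ∃ j₀, ∀ j ≠ j₀, Disjoint (x.pieces j) (Ioo w (x.lo i)) := by
  have left_of : ∀ j, ¬ Disjoint (x.pieces j) (Ioo w (x.lo i)) →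
      j ≠ i ∧ x.hi j ≤ x.lo i ∧ w < x.hi j := by
    intro j hj
    obtain ⟨h₁, h₂⟩ := lt_hi_and_lo_lt_of_not_disjoint hj
    have hji : j ≠ i := by
      rintro rfl
      exact hj (x.pieces_eq j ▸ Ioo_disjoint_Ioo.2 (by simp))
    refine ⟨hji, ?_, h₁⟩
    rcases hi_le_lo_or_hi_le_lo (hne j) (hne i) hji with h | h
    · exact h
    · linarith [hne i]
  by_contra! h
  obtain ⟨j, -, hj⟩ := h i
  obtain ⟨k, hkj, hk⟩ := h j
  obtain ⟨hji, hj₁, hj₂⟩ := left_of j hj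
  obtain ⟨hki, hk₁, hk₂⟩ := left_of k hk
  rcases hi_le_lo_or_hi_le_lo (hne j) (hne k) hkj.symm with hjk | hkj
  · exact htrap k hki (pieces_subset_Icc (by linarith) hk₁)
  · exact htrap j hji (pieces_subset_Icc (by linarith) hj₁)

theorem measure_closure_pieces (μ : Measure ℝ) [NullSingletonClass μ] (j : Fin n) :
    μ (closure (x.pieces j)) = μ (x.pieces j) := by
  refine le_antisymm ?_ (measure_mono subset_closure)
  rw [x.pieces_eq, measure_congr (Ioo_ae_eq_Icc (μ := μ))]
  exact measure_mono (closure_minimal Ioo_subset_Icc_self isClosed_Icc)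

theorem Complete.measure_Icc_le_sum (hc : x.Complete) (μ : Measure ℝ) [NullSingletonClass μ] :
    μ (Icc 0 1) ≤ ∑ j, μ (x.pieces j) :=
  calc μ (Icc 0 1) ≤ μ (⋃ j, closure (x.pieces j)) := measure_mono hc
    _ ≤ ∑ j, μ (closure (x.pieces j)) := measure_iUnion_fintype_le _ _
    _ = ∑ j, μ (x.pieces j) := by simp_rw [measure_closure_pieces]

theorem Complete.subset_closure_of_forall_ne_disjoint (hc : x.Complete) {R : Set ℝ}
    (hR : IsOpen R) (hR₁ : R ⊆ Icc 0 1) {j₀ : Fin n}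
    (h : ∀ j ≠ j₀, Disjoint (x.pieces j) R) : R ⊆ closure (x.pieces j₀) := by
  intro t ht
  obtain ⟨j, hj⟩ := mem_iUnion.1 (hc (hR₁ ht))
  obtain rfl | hj₀ := eq_or_ne j j₀
  · exact hj
  · obtain ⟨s, hs⟩ := (closure_inter_open_nonempty_iff hR).1 ⟨t, hj, ht⟩
    exact (disjoint_left.1 (h j hj₀) hs.1 hs.2).elim

theorem card_div_le_of_forall_subset (hlen : ∀ j, x.hi j - x.lo j = 1 / n)
    {S : Finset (Fin n)} {u w : ℝ} (huw : u ≤ w) (hS : ∀ j ∈ S, x.pieces j ⊆ Icc u w) :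
    (S.card : ℝ) / n ≤ w - u := by
  have hdisj : (S : Set (Fin n)).PairwiseDisjoint x.pieces := fun _ _ _ _ hjk => x.disj hjk
  have hvol : volume (⋃ j ∈ S, x.pieces j) = ENNReal.ofReal (S.card / n) := by
    rw [measure_biUnion_finset hdisj fun j _ => x.pieces_eq j ▸ measurableSet_Ioo]
    simp_rw [x.pieces_eq, Real.volume_Ioo, hlen]
    rw [Finset.sum_const, nsmul_eq_mul, ← ENNReal.ofReal_natCast,
      ← ENNReal.ofReal_mul (Nat.cast_nonneg _), mul_one_div]
  have := (measure_mono (iUnion₂_subset hS)).trans_eq (Real.volume_Icc (a := u) (b := w))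
  rwa [hvol, ENNReal.ofReal_le_ofReal_iff (sub_nonneg.2 huw)] at this

/-- The multiple is the number of pieces left of piece `k`: they fill `[0, x.lo k]`, and those
on its right fill `[x.hi k, 1]`. -/
theorem exists_lo_eq_nat_div (hlen : ∀ j, x.hi j - x.lo j = 1 / n) (k : Fin n) :
    ∃ m : ℕ, x.lo k = m / n := by
  have hn : (0 : ℝ) < n := by exact_mod_cast k.pos
  have hne : ∀ j, x.lo j < x.hi j := fun j => sub_pos.1 (hlen j ▸ by positivity)
  set L := Finset.univ.filter fun j => x.hi j ≤ x.lo k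
  set R := Finset.univ.filter fun j => x.hi k ≤ x.lo j
  have hL : (L.card : ℝ) / n ≤ x.lo k - 0 :=
    card_div_le_of_forall_subset hlen (zero_le_lo (hne k)) fun j hj =>
      pieces_subset_Icc (zero_le_lo (hne j)) (Finset.mem_filter.1 hj).2
  have hR : (R.card : ℝ) / n ≤ 1 - x.hi k :=
    card_div_le_of_forall_subset hlen (hi_le_one (hne k)) fun j hj =>
      pieces_subset_Icc (Finset.mem_filter.1 hj).2 (hi_le_one (hne j))
  have hcard : n - 1 ≤ L.card + R.card := by
    have : Finset.univ.erase k ⊆ L ∪ R := fun j hj => by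
      rcases hi_le_lo_or_hi_le_lo (hne j) (hne k) (Finset.ne_of_mem_erase hj) with h | h
      · exact Finset.mem_union_left _ (Finset.mem_filter.2 ⟨Finset.mem_univ _, h⟩)
      · exact Finset.mem_union_right _ (Finset.mem_filter.2 ⟨Finset.mem_univ _, h⟩)
    simpa [Finset.card_erase_of_mem] using
      (Finset.card_le_card this).trans (Finset.card_union_le L R)
  have hcard' : (n : ℝ) - 1 ≤ L.card + R.card := by
    have : ((n - 1 : ℕ) : ℝ) ≤ L.card + R.card := by exact_mod_cast hcard
    rwa [Nat.cast_sub (by exact_mod_cast hn), Nat.cast_one] at this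
  refine ⟨L.card, le_antisymm ?_ (by linarith)⟩
  have hlenk : (x.hi k - x.lo k) * n = 1 := by rw [hlen k, one_div_mul_cancel hn.ne']
  rw [le_div_iff₀ hn]
  rw [div_le_iff₀ hn] at hR
  linarith

end ConnDiv

section EnvyFree

variable {n : ℕ} {v : Fin n → Measure ℝ} {x : ConnDiv n}

theorem EnvyFree.measure_Icc_le_card_mul (hef : EnvyFree v x) (hc : x.Complete) (i : Fin n)
    [NullSingletonClass (v i)] : v i (Icc 0 1) ≤ n * v i (x.pieces i) :=
  calc v i (Icc 0 1) ≤ ∑ j, v i (x.pieces j) := hc.measure_Icc_le_sum (v i)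
    _ ≤ ∑ _j : Fin n, v i (x.pieces i) := Finset.sum_le_sum fun j _ => hef i j
    _ = n * v i (x.pieces i) := by simp

theorem EnvyFree.measure_le_of_forall_ne_disjoint (hef : EnvyFree v x) (hc : x.Complete)
    {i : Fin n} [NullSingletonClass (v i)] {R : Set ℝ} (hR : IsOpen R) (hR₁ : R ⊆ Icc 0 1)
    {j₀ : Fin n} (h : ∀ j ≠ j₀, Disjoint (x.pieces j) R) : v i R ≤ v i (x.pieces i) :=
  calc v i R ≤ v i (closure (x.pieces j₀)) :=
        measure_mono (hc.subset_closure_of_forall_ne_disjoint hR hR₁ h)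
    _ = v i (x.pieces j₀) := x.measure_closure_pieces (v i) j₀
    _ ≤ v i (x.pieces i) := hef i j₀

end EnvyFree

noncomputable def radius (n : ℕ) : ℝ := 1 / (4 * n)

noncomputable def centre (n k : ℕ) : ℝ := (k + 1) / n

section Constants

variable {n : ℕ}

theorem radius_pos (hn : 0 < n) : 0 < radius n := by
  unfold radius; positivity

theorem card_mul_radius (hn : 0 < n) : n * radius n = 4⁻¹ := by
  unfold radius; field_simp

theorem two_mul_radius_lt (hn : 0 < n) : 2 * radius n < 1 / n := by
  unfold radius
  have : (0 : ℝ) < n := by exact_mod_cast hn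
  rw [mul_one_div, div_lt_div_iff₀ (by positivity) this]
  linarith

theorem centre_zero : centre n 0 = 1 / n := by
  simp [centre]

theorem centre_sub_radius_nonneg (hn : 0 < n) (k : ℕ) : 0 ≤ centre n k - radius n := by
  have : (0 : ℝ) < n := by exact_mod_cast hn
  unfold centre radius
  rw [sub_nonneg, div_le_div_iff₀ (by positivity) (by positivity)]
  nlinarith [(Nat.cast_nonneg k : (0 : ℝ) ≤ k)]

theorem centre_add_radius_lt_one {k : ℕ} (hk : k + 1 < n) : centre n k + radius n < 1 := by
  have hk' : (k : ℝ) + 1 + 1 ≤ n := by exact_mod_cast hk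
  have : (0 : ℝ) < n := by linarith [(Nat.cast_nonneg k : (0 : ℝ) ≤ k)]
  unfold centre radius
  rw [div_add_div _ _ (by positivity) (by positivity), div_lt_one (by positivity)]
  nlinarith

theorem centre_add_radius_lt_centre_sub_radius (hn : 0 < n) {k l : ℕ} (hkl : k < l) :
    centre n k + radius n < centre n l - radius n := by
  have : (0 : ℝ) < n := by exact_mod_cast hn
  have : (k : ℝ) + 1 ≤ l := by exact_mod_cast hkl
  unfold centre radius
  rw [div_add_div _ _ (by positivity) (by positivity),
    div_sub_div _ _ (by positivity) (by positivity), div_lt_div_iff_of_pos_right (by positivity)]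
  nlinarith

theorem inv_le_centre_sub_radius (hn : 0 < n) {k : ℕ} (hk : 0 < k) :
    1 / n ≤ centre n k - radius n := by
  have hn' : (0 : ℝ) < n := by exact_mod_cast hn
  have : (1 : ℝ) ≤ k := by exact_mod_cast hk
  unfold centre radius
  rw [div_sub_div _ _ (by positivity) (by positivity),
    div_le_div_iff₀ (by positivity) (by positivity)]
  nlinarith [mul_pos hn' hn']

end Constants

noncomputable def cake (n : ℕ) (i : Fin n) : Measure ℝ :=
  if (i : ℕ) + 1 < n then unifOn (centre n i - radius n) (centre n i + radius n) 1
  else unifOn 0 1 1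

instance (n : ℕ) (i : Fin n) : NullSingletonClass (cake n i) := by
  unfold cake; split <;> infer_instance

section Cake

variable {n : ℕ} {i j : Fin n}

theorem cake_of_lt (hi : (i : ℕ) + 1 < n) :
    cake n i = unifOn (centre n i - radius n) (centre n i + radius n) 1 :=
  if_pos hi

theorem cake_apply_of_not_lt (hi : ¬ (i : ℕ) + 1 < n) (s : Set ℝ) :
    cake n i s = volume (s ∩ Ioo 0 1) := by
  rw [cake, if_neg hi, unifOn_zero_one_apply]

theorem window_subset_Icc {k : ℕ} (hk : k + 1 < n) :
    Ioo (centre n k - radius n) (centre n k + radius n) ⊆ Icc 0 1 :=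
  Ioo_subset_Icc_self.trans
    (Icc_subset_Icc (centre_sub_radius_nonneg (by omega) k) (centre_add_radius_lt_one hk).le)

theorem cake_Icc (i : Fin n) : cake n i (Icc 0 1) = 1 := by
  unfold cake
  split_ifs with hi
  · exact unifOn_of_subset (by linarith [radius_pos i.pos]) (window_subset_Icc hi)
  · exact unifOn_of_subset one_pos Ioo_subset_Icc_self

theorem cake_compl_Icc (i : Fin n) : cake n i (Icc 0 1)ᶜ = 0 := by
  unfold cake
  split_ifs with hi
  · exact unifOn_eq_zero_of_disjoint (disjoint_compl_left.mono_right (window_subset_Icc hi))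
  · exact unifOn_eq_zero_of_disjoint (disjoint_compl_left.mono_right Ioo_subset_Icc_self)

theorem disjoint_Icc_window (hn : 0 < n) {k l : ℕ} (hkl : k ≠ l) :
    Disjoint (Icc (centre n k - radius n) (centre n k + radius n))
      (Ioo (centre n l - radius n) (centre n l + radius n)) := by
  refine disjoint_left.2 fun t ht ht' => ?_
  rcases hkl.lt_or_gt with h | h
  · linarith [ht.2, ht'.1, centre_add_radius_lt_centre_sub_radius hn h]
  · linarith [ht.1, ht'.2, centre_add_radius_lt_centre_sub_radius hn h]

theorem card_mul_cake_Icc_lt_one (hji : j ≠ i) :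
    n * cake n j (Icc (centre n i - radius n) (centre n i + radius n)) < 1 := by
  by_cases hj : (j : ℕ) + 1 < n
  · rw [cake_of_lt hj, unifOn_eq_zero_of_disjoint
      (disjoint_Icc_window i.pos fun h => hji (Fin.ext h.symm)), mul_zero]
    exact zero_lt_one
  · calc (n : ℝ≥0∞) * cake n j (Icc (centre n i - radius n) (centre n i + radius n))
        ≤ n * volume (Icc (centre n i - radius n) (centre n i + radius n)) := by
          rw [cake_apply_of_not_lt hj]
          gcongr
          exact inter_subset_left
      _ = ENNReal.ofReal 2⁻¹ := by
          rw [Real.volume_Icc, ← ENNReal.ofReal_natCast,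
            ← ENNReal.ofReal_mul (Nat.cast_nonneg _),
            show centre n i + radius n - (centre n i - radius n) = 2 * radius n by ring,
            mul_left_comm, card_mul_radius i.pos]
          norm_num
      _ < 1 := by norm_num

end Cake

section CompleteEnvyFree

variable {n : ℕ} {x : ConnDiv n} {i : Fin n}

theorem one_le_card_mul_cake (hc : x.Complete) (hef : EnvyFree (cake n) x) (i : Fin n) :
    1 ≤ n * cake n i (x.pieces i) :=
  cake_Icc i ▸ hef.measure_Icc_le_card_mul hc i

theorem lo_lt_hi (hc : x.Complete) (hef : EnvyFree (cake n) x) (i : Fin n) : x.lo i < x.hi i := by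
  by_contra! h
  have := one_le_card_mul_cake hc hef i
  rw [x.pieces_eq, Ioo_eq_empty h.not_gt, measure_empty, mul_zero] at this
  exact absurd this (by norm_num)

theorem not_pieces_subset_Icc (hc : x.Complete) (hef : EnvyFree (cake n) x) {j : Fin n}
    (hji : j ≠ i) : ¬ x.pieces j ⊆ Icc (centre n i - radius n) (centre n i + radius n) :=
  fun h => (one_le_card_mul_cake hc hef j).not_gt
    ((mul_le_mul_right (measure_mono h) _).trans_lt (card_mul_cake_Icc_lt_one hji))

theorem centre_sub_radius_lt_hi_and_lo_lt (hc : x.Complete) (hef : EnvyFree (cake n) x)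
    (hi : (i : ℕ) + 1 < n) :
    centre n i - radius n < x.hi i ∧ x.lo i < centre n i + radius n := by
  refine x.lt_hi_and_lo_lt_of_not_disjoint fun h => ?_
  have := one_le_card_mul_cake hc hef i
  rw [cake_of_lt hi, unifOn_eq_zero_of_disjoint h, mul_zero] at this
  exact absurd this (by norm_num)

/-- If piece `i` ended left of the centre, the part of the window right of it would be worth more
than half to player `i`; yet, no piece fitting inside the window, it is covered by one piece. -/
theorem centre_le_hi (hc : x.Complete) (hef : EnvyFree (cake n) x) (hi : (i : ℕ) + 1 < n) :
    centre n i ≤ x.hi i := by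
  set c := centre n i
  set r := radius n
  by_contra! hlt
  have hne := lo_lt_hi hc hef
  obtain ⟨hmeet, -⟩ := centre_sub_radius_lt_hi_and_lo_lt hc hef hi
  have hR : Ioo (x.hi i) (c + r) ⊆ Icc 0 1 :=
    Ioo_subset_Icc_self.trans (Icc_subset_Icc (x.zero_le_lo (hne i) |>.trans (hne i).le)
      (centre_add_radius_lt_one hi).le)
  obtain ⟨j₀, hj₀⟩ := x.exists_forall_ne_disjoint_Ioo_hi hne fun j hji hsub =>
    not_pieces_subset_Icc hc hef hji (hsub.trans (Icc_subset_Icc hmeet.le le_rfl))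
  have key := hef.measure_le_of_forall_ne_disjoint hc (i := i) isOpen_Ioo hR hj₀
  rw [cake_of_lt hi, unifOn_le_unifOn_iff (by linarith [radius_pos i.pos]),
    inter_eq_left.2 (Ioo_subset_Ioo hmeet.le le_rfl)] at key
  have hsub : x.pieces i ∩ Ioo (c - r) (c + r) ⊆ Ioo (c - r) (x.hi i) :=
    fun t ⟨ht, ht'⟩ => ⟨ht'.1, (x.pieces_eq i ▸ ht).2⟩
  have := key.trans (measure_mono hsub)
  rw [Real.volume_Ioo, Real.volume_Ioo, ENNReal.ofReal_le_ofReal_iff (by linarith)] at this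
  linarith

theorem lo_le_centre (hc : x.Complete) (hef : EnvyFree (cake n) x) (hi : (i : ℕ) + 1 < n) :
    x.lo i ≤ centre n i := by
  set c := centre n i
  set r := radius n
  by_contra! hlt
  have hne := lo_lt_hi hc hef
  obtain ⟨-, hmeet⟩ := centre_sub_radius_lt_hi_and_lo_lt hc hef hi
  have hR : Ioo (c - r) (x.lo i) ⊆ Icc 0 1 :=
    Ioo_subset_Icc_self.trans (Icc_subset_Icc (centre_sub_radius_nonneg i.pos i)
      ((hne i).le.trans (x.hi_le_one (hne i))))
  obtain ⟨j₀, hj₀⟩ := x.exists_forall_ne_disjoint_Ioo_lo hne fun j hji hsub =>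
    not_pieces_subset_Icc hc hef hji (hsub.trans (Icc_subset_Icc le_rfl hmeet.le))
  have key := hef.measure_le_of_forall_ne_disjoint hc (i := i) isOpen_Ioo hR hj₀
  rw [cake_of_lt hi, unifOn_le_unifOn_iff (by linarith [radius_pos i.pos]),
    inter_eq_left.2 (Ioo_subset_Ioo le_rfl hmeet.le)] at key
  have hsub : x.pieces i ∩ Ioo (c - r) (c + r) ⊆ Ioo (x.lo i) (c + r) :=
    fun t ⟨ht, ht'⟩ => ⟨(x.pieces_eq i ▸ ht).1, ht'.2⟩
  have := key.trans (measure_mono hsub)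
  rw [Real.volume_Ioo, Real.volume_Ioo, ENNReal.ofReal_le_ofReal_iff (by linarith)] at this
  linarith

theorem cake_pieces_of_not_lt (hc : x.Complete) (hef : EnvyFree (cake n) x)
    (hl : ¬ (i : ℕ) + 1 < n) (j : Fin n) :
    cake n i (x.pieces j) = ENNReal.ofReal (x.hi j - x.lo j) := by
  have hne := lo_lt_hi hc hef j
  rw [cake_apply_of_not_lt hl, x.pieces_eq, inter_eq_left.2
    (Ioo_subset_Ioo (x.zero_le_lo hne) (x.hi_le_one hne)), Real.volume_Ioo]

/-- Each centre `(k + 1) / n` lies in the closure of piece `k`, hence not inside the last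
player's piece. -/
theorem hi_sub_lo_le_of_not_lt (hc : x.Complete) (hef : EnvyFree (cake n) x)
    (hl : ¬ (i : ℕ) + 1 < n) : x.hi i - x.lo i ≤ 1 / n := by
  have hne := lo_lt_hi hc hef
  by_contra! h
  obtain ⟨k, hk, hmem⟩ :=
    exists_succ_div_mem_Ioo i.pos (x.zero_le_lo (hne i)) (x.hi_le_one (hne i)) h
  set j : Fin n := ⟨k, by omega⟩
  have hji : j ≠ i := fun h => hl (h ▸ hk)
  have h₁ := lo_le_centre hc hef (i := j) hk
  have h₂ := centre_le_hi hc hef (i := j) hk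
  rcases x.hi_le_lo_or_hi_le_lo (hne j) (hne i) hji with h | h
  · exact (hmem.1.trans_le h₂).not_ge h
  · exact (h₁.trans_lt hmem.2).not_ge h

theorem hi_sub_lo_eq (hc : x.Complete) (hef : EnvyFree (cake n) x) (j : Fin n) :
    x.hi j - x.lo j = 1 / n := by
  have hn : 0 < n := j.pos
  set l : Fin n := ⟨n - 1, by omega⟩
  have hl : ¬ (l : ℕ) + 1 < n := show ¬ n - 1 + 1 < n by omega
  have hne := lo_lt_hi hc hef
  have hle : ∀ k, x.hi k - x.lo k ≤ 1 / n := fun k => by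
    have := hef l k
    rw [cake_pieces_of_not_lt hc hef hl, cake_pieces_of_not_lt hc hef hl,
      ENNReal.ofReal_le_ofReal_iff (sub_nonneg.2 (hne l).le)] at this
    exact this.trans (hi_sub_lo_le_of_not_lt hc hef hl)
  have hsum : ∑ _j : Fin n, (1 / n : ℝ) ≤ ∑ j, (x.hi j - x.lo j) := by
    have := hc.measure_Icc_le_sum (cake n l)
    simp_rw [cake_Icc, cake_pieces_of_not_lt hc hef hl] at this
    rw [← ENNReal.ofReal_sum_of_nonneg fun j _ => sub_nonneg.2 (hne j).le,
      ENNReal.one_le_ofReal] at this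
    rwa [Finset.sum_const, Finset.card_univ, Fintype.card_fin, nsmul_eq_mul,
      mul_one_div_cancel (by positivity)]
  exact ((Finset.sum_eq_sum_iff_of_le fun j _ => hle j).1
    (le_antisymm (Finset.sum_le_sum fun j _ => hle j) hsum) j (Finset.mem_univ j))

/-- Piece `i` has length `1 / n`, starts at a multiple of `1 / n` and has the centre `(i + 1) / n`
in its closure, so the centre is one of its ends. -/
theorem cake_pieces_of_lt (hc : x.Complete) (hef : EnvyFree (cake n) x)
    (hi : (i : ℕ) + 1 < n) : cake n i (x.pieces i) = 2⁻¹ := by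
  have hn : (0 : ℝ) < n := by exact_mod_cast i.pos
  have hlen := hi_sub_lo_eq hc hef
  obtain ⟨m, hm⟩ := x.exists_lo_eq_nat_div hlen i
  have h₁ := lo_le_centre hc hef hi
  have h₂ := centre_le_hi hc hef hi
  have hr := two_mul_radius_lt i.pos
  have hr₀ := radius_pos i.pos
  have hhi : x.hi i = (m + 1) / n := by rw [add_div, ← hm]; linarith [hlen i]
  rw [hm, centre, div_le_div_iff_of_pos_right hn] at h₁
  rw [hhi, centre, div_le_div_iff_of_pos_right hn] at h₂
  have hcases : m = i ∨ m = i + 1 := by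
    have h₃ : m ≤ (i : ℕ) + 1 := by exact_mod_cast h₁
    have h₄ : (i : ℕ) ≤ m := by exact_mod_cast (by linarith : (i : ℝ) ≤ m)
    omega
  rw [cake_of_lt hi, x.pieces_eq]
  apply unifOn_eq_inv_two hr₀
  rw [Ioo_inter_Ioo]
  rcases hcases with rfl | rfl
  · have hlo : x.lo i = centre n i - 1 / n := by rw [hm, centre]; ring
    left
    rw [hlo, show x.hi i = centre n i by linarith [hlen i], max_eq_right (by linarith),
      min_eq_left (by linarith)]
  · have hlo : x.lo i = centre n i := by rw [hm, centre]; push_cast; ring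
    right
    rw [hlo, show x.hi i = centre n i + 1 / n by linarith [hlen i], max_eq_left (by linarith),
      min_eq_right (by linarith)]

end CompleteEnvyFree

/-- The `max` only matters for player `0`, who shares the left half of her window with the last
player. -/
noncomputable def witness (n : ℕ) : ConnDiv n where
  pieces i :=
    if (i : ℕ) + 1 < n then Ioo (max (centre n i - radius n) (1 / n)) (centre n i + radius n)
    else Ioo (0 : ℝ) (1 / n)
  isInterval i := by split <;> exact ⟨_, _, rfl⟩
  subset i := by
    split_ifs with hi
    · exact (Ioo_subset_Ioo_left (le_max_left _ _)).trans (window_subset_Icc hi)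
    · exact Ioo_subset_Icc_self.trans
        (Icc_subset_Icc le_rfl (div_le_one_of_le₀ (by exact_mod_cast i.pos) (Nat.cast_nonneg n)))
  disj i j hij := by
    have hij' : (i : ℕ) ≠ j := Fin.val_injective.ne hij
    dsimp only
    split_ifs with hi hj hj
    · exact (disjoint_Icc_window i.pos hij').mono
        (Ioo_subset_Icc_self.trans (Icc_subset_Icc (le_max_left _ _) le_rfl))
        (Ioo_subset_Ioo_left (le_max_left _ _))
    · exact disjoint_left.2 fun t ht ht' => ((le_max_right _ _).trans ht.1.le).not_gt ht'.2
    · exact disjoint_left.2 fun t ht ht' => ((le_max_right _ _).trans ht'.1.le).not_gt ht.2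
    · exact absurd (Fin.ext (by omega)) hij

section Witness

variable {n : ℕ} {i : Fin n}

theorem witness_pieces_of_lt (hi : (i : ℕ) + 1 < n) :
    (witness n).pieces i = Ioo (max (centre n i - radius n) (1 / n)) (centre n i + radius n) :=
  if_pos hi

theorem witness_pieces_of_not_lt (hi : ¬ (i : ℕ) + 1 < n) :
    (witness n).pieces i = Ioo (0 : ℝ) (1 / n) :=
  if_neg hi

theorem witness_pieces_subset_window (hi : (i : ℕ) + 1 < n) :
    (witness n).pieces i ⊆ Ioo (centre n i - radius n) (centre n i + radius n) :=
  witness_pieces_of_lt hi ▸ Ioo_subset_Ioo_left (le_max_left _ _)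

theorem cake_witness_of_ne_zero (hi : (i : ℕ) + 1 < n) (h₀ : (i : ℕ) ≠ 0) :
    cake n i ((witness n).pieces i) = 1 := by
  rw [cake_of_lt hi, witness_pieces_of_lt hi,
    max_eq_left (inv_le_centre_sub_radius i.pos (Nat.pos_of_ne_zero h₀))]
  exact unifOn_of_subset (by linarith [radius_pos i.pos]) subset_rfl

theorem cake_witness_zero (hi : (i : ℕ) + 1 < n) (h₀ : (i : ℕ) = 0) :
    cake n i ((witness n).pieces i) = 2⁻¹ := by
  have hc : centre n i = 1 / n := h₀ ▸ centre_zero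
  have hr := radius_pos i.pos
  rw [cake_of_lt hi, witness_pieces_of_lt hi, hc, max_eq_right (by linarith)]
  exact unifOn_eq_inv_two hr (.inr (inter_eq_left.2 (Ioo_subset_Ioo_left (by linarith))))

theorem cake_witness_of_not_lt (hi : ¬ (i : ℕ) + 1 < n) :
    cake n i ((witness n).pieces i) = ENNReal.ofReal (1 / n) := by
  have hn : (0 : ℝ) < n := by exact_mod_cast i.pos
  rw [cake_apply_of_not_lt hi, witness_pieces_of_not_lt hi,
    inter_eq_left.2 (Ioo_subset_Ioo_right (div_le_one_of_le₀ (Nat.one_le_cast.2 i.pos) hn.le)),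
    Real.volume_Ioo, sub_zero]

theorem envyFree_witness : EnvyFree (cake n) (witness n) := by
  intro i j
  by_cases hi : (i : ℕ) + 1 < n
  · by_cases h₀ : (i : ℕ) = 0
    · rw [cake_witness_zero hi h₀]
      by_cases hj : (j : ℕ) + 1 < n
      · obtain rfl | hji := eq_or_ne j i
        · rw [cake_witness_zero hi h₀]
        · rw [cake_of_lt hi, unifOn_eq_zero_of_disjoint
            (((disjoint_Icc_window i.pos (Fin.val_injective.ne hji)).mono_left
              Ioo_subset_Icc_self).mono_left (witness_pieces_subset_window hj))]
          exact zero_le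
      · have hc : centre n i = 1 / n := h₀ ▸ centre_zero
        have hr := two_mul_radius_lt i.pos
        have hr₀ := radius_pos i.pos
        rw [cake_of_lt hi, witness_pieces_of_not_lt hj, hc, unifOn_eq_inv_two hr₀ (.inl ?_)]
        rw [Ioo_inter_Ioo, max_eq_right (by linarith), min_eq_left (by linarith)]
    · rw [cake_witness_of_ne_zero hi h₀, cake_of_lt hi]
      exact unifOn_le_one (by linarith [radius_pos i.pos]) _
  · rw [cake_witness_of_not_lt hi]
    by_cases hj : (j : ℕ) + 1 < n
    · rw [cake_apply_of_not_lt hi]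
      calc volume ((witness n).pieces j ∩ Ioo 0 1)
          ≤ volume (Ioo (centre n j - radius n) (centre n j + radius n)) :=
            measure_mono (inter_subset_left.trans (witness_pieces_subset_window hj))
        _ ≤ ENNReal.ofReal (1 / n) := by
            rw [Real.volume_Ioo]
            exact ENNReal.ofReal_le_ofReal (by linarith [two_mul_radius_lt i.pos])
    · rw [show j = i from Fin.ext (by omega), cake_witness_of_not_lt hi]

theorem not_complete_witness (hn : 1 < n) : ¬ (witness n).Complete := by
  intro h
  obtain ⟨i, hi⟩ := mem_iUnion.1 (h (right_mem_Icc.2 zero_le_one))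
  have hlt : ∃ b < 1, (witness n).pieces i ⊆ Iic b := by
    by_cases hi : (i : ℕ) + 1 < n
    · exact ⟨_, centre_add_radius_lt_one hi,
        witness_pieces_of_lt hi ▸ Ioo_subset_Icc_self.trans Icc_subset_Iic_self⟩
    · exact ⟨1 / n, (div_lt_one (by positivity)).2 (by exact_mod_cast hn),
        witness_pieces_of_not_lt hi ▸ Ioo_subset_Icc_self.trans Icc_subset_Iic_self⟩
  obtain ⟨b, hb, hsub⟩ := hlt
  exact hb.not_ge (closure_minimal hsub isClosed_Iic hi)

end Witness

/-- For every `n > 2` there is a cake instance and an envy-free partial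
connected division giving players `2,…,n-1` twice the utility they receive in
any envy-free complete connected division, while players `1` and `n` receive at
least as much as in any envy-free complete connected division. -/
theorem pareto_dominant_partial_division (n : ℕ) (hn : 2 < n) :
    ∃ v : Fin n → Measure ℝ,
      (∀ i, v i (Set.Icc (0:ℝ) 1) = 1) ∧
      (∀ i, ∀ t : ℝ, v i {t} = 0) ∧
      (∀ i, v i (Set.Icc (0:ℝ) 1)ᶜ = 0) ∧
      ∃ y : ConnDiv n, EnvyFree v y ∧ ¬ y.Complete ∧
        ∀ x : ConnDiv n, x.Complete → EnvyFree v x →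
          (∀ i : Fin n, 1 ≤ i.val → i.val ≤ n - 2 →
            v i (y.pieces i) = 2 * v i (x.pieces i)) ∧
          v ⟨0, by omega⟩ (x.pieces ⟨0, by omega⟩) ≤ v ⟨0, by omega⟩ (y.pieces ⟨0, by omega⟩) ∧
          v ⟨n-1, by omega⟩ (x.pieces ⟨n-1, by omega⟩) ≤ v ⟨n-1, by omega⟩ (y.pieces ⟨n-1, by omega⟩) := by
  refine ⟨cake n, cake_Icc, fun i t => measure_singleton t, cake_compl_Icc, witness n,
    envyFree_witness, not_complete_witness (by omega), fun x hc hef => ⟨?_, ?_, ?_⟩⟩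
  · intro i h₁ h₂
    rw [cake_witness_of_ne_zero (by omega) (by omega), cake_pieces_of_lt hc hef (by omega),
      ENNReal.mul_inv_cancel two_ne_zero ENNReal.ofNat_ne_top]
  · have h₀ : ((⟨0, by omega⟩ : Fin n) : ℕ) + 1 < n := show 0 + 1 < n by omega
    rw [cake_witness_zero h₀ rfl, cake_pieces_of_lt hc hef h₀]
  · have hl : ¬ ((⟨n - 1, by omega⟩ : Fin n) : ℕ) + 1 < n := show ¬ n - 1 + 1 < n by omega
    rw [cake_witness_of_not_lt hl, cake_pieces_of_not_lt hc hef hl, hi_sub_lo_eq hc hef]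
end

section
/- For two players where Alice's measure is uniform on [0,1] and Bob's measure is uniform on [1/2 - δ, 1/2 + δ], the only envy-free complete connected division cuts at the point 1/2, giving utilitarian welfare exactly 1. -/
/-!
Completeness and connectedness force the two pieces to be `(0, c)` and `(c, 1)` for a single
cut `c`. Both Alice's and Bob's measures give the two sides of `1/2` equal mass, and positive
mass to every interval ending or starting at `1/2`. Hence for `c ≠ 1/2` both players strictly
prefer the same piece, the one containing `1/2`, and one of them envies the other.
-/

open MeasureTheory Set
open scoped ENNReal

/-- Alice's measure: uniform (Lebesgue) on `[0,1]`. -/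
noncomputable def vA : Measure ℝ := volume.restrict (Set.Icc (0:ℝ) 1)

/-- Bob's measure: uniform on `[1/2 - δ, 1/2 + δ]`. -/
noncomputable def vB (δ : ℝ) : Measure ℝ := unifOn (1/2 - δ) (1/2 + δ) 1

lemma Icc_subset_of_Ioo_subset {a b : ℝ} {s : Set ℝ} (hab : a < b) (hs : IsClosed s)
    (h : Ioo a b ⊆ s) : Icc a b ⊆ s :=
  closure_Ioo hab.ne ▸ closure_minimal h hs

lemma Ioo_eq_Ioo_zero_one_of_Icc_subset_closure {a b : ℝ} (hsub : Ioo a b ⊆ Icc 0 1)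
    (hdense : Icc 0 1 ⊆ closure (Ioo a b)) : Ioo a b = Ioo 0 1 := by
  have hcl : Icc (0 : ℝ) 1 ⊆ Icc a b :=
    hdense.trans (closure_minimal Ioo_subset_Icc_self isClosed_Icc)
  obtain ⟨ha, hb⟩ := (Icc_subset_Icc_iff zero_le_one).1 hcl
  have hab : a < b := ha.trans_lt (zero_lt_one.trans_le hb)
  obtain ⟨ha', hb'⟩ :=
    (Icc_subset_Icc_iff hab.le).1 (Icc_subset_of_Ioo_subset hab isClosed_Icc hsub)
  rw [le_antisymm ha ha', le_antisymm hb' hb]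

lemma eq_cut_of_Icc_subset_union {a b a' b' : ℝ} (ha : 0 ≤ a) (hab : a ≤ b) (hba' : b ≤ a')
    (ha'b' : a' ≤ b') (hb' : b' ≤ 1) (hcov : Icc 0 1 ⊆ Icc a b ∪ Icc a' b') :
    a = 0 ∧ a' = b ∧ b' = 1 := by
  have h0 := hcov (left_mem_Icc.2 zero_le_one)
  have h1 := hcov (right_mem_Icc.2 zero_le_one)
  have hmid : b = a' := by
    by_contra hne
    have hlt : b < a' := hba'.lt_of_ne hne
    rcases hcov (show (b + a') / 2 ∈ Icc (0 : ℝ) 1 by constructor <;> linarith) with h | h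
    · linarith [h.2]
    · linarith [h.1]
  refine ⟨?_, hmid.symm, ?_⟩
  · rcases h0 with h | h <;> linarith [h.1]
  · rcases h1 with h | h <;> linarith [h.2]

theorem exists_cut_of_disjoint_Ioo {a b a' b' : ℝ} (hsub : Ioo a b ⊆ Icc 0 1)
    (hsub' : Ioo a' b' ⊆ Icc 0 1) (hdisj : Disjoint (Ioo a b) (Ioo a' b'))
    (hcov : Icc 0 1 ⊆ closure (Ioo a b) ∪ closure (Ioo a' b')) :
    ∃ c ∈ Icc (0 : ℝ) 1, (Ioo a b = Ioo 0 c ∧ Ioo a' b' = Ioo c 1) ∨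
      (Ioo a b = Ioo c 1 ∧ Ioo a' b' = Ioo 0 c) := by
  rcases (Ioo a b).eq_empty_or_nonempty with hP | hP
  · rw [hP, closure_empty, empty_union] at hcov
    exact ⟨0, left_mem_Icc.2 zero_le_one,
      .inl ⟨by simp [hP], Ioo_eq_Ioo_zero_one_of_Icc_subset_closure hsub' hcov⟩⟩
  rcases (Ioo a' b').eq_empty_or_nonempty with hQ | hQ
  · rw [hQ, closure_empty, union_empty] at hcov
    exact ⟨1, right_mem_Icc.2 zero_le_one,
      .inl ⟨Ioo_eq_Ioo_zero_one_of_Icc_subset_closure hsub hcov, by simp [hQ]⟩⟩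
  rw [nonempty_Ioo] at hP hQ
  obtain ⟨ha, hb⟩ :=
    (Icc_subset_Icc_iff hP.le).1 (Icc_subset_of_Ioo_subset hP isClosed_Icc hsub)
  obtain ⟨ha', hb'⟩ :=
    (Icc_subset_Icc_iff hQ.le).1 (Icc_subset_of_Ioo_subset hQ isClosed_Icc hsub')
  rw [closure_Ioo hP.ne, closure_Ioo hQ.ne] at hcov
  rw [Ioo_disjoint_Ioo, min_le_iff, le_max_iff, le_max_iff] at hdisj
  rcases hdisj with (h | hba') | (hb'a | h)
  · exact absurd h hP.not_ge
  · obtain ⟨rfl, rfl, rfl⟩ := eq_cut_of_Icc_subset_union ha hP.le hba' hQ.le hb' hcov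
    exact ⟨a', ⟨ha', hb⟩, .inl ⟨rfl, rfl⟩⟩
  · obtain ⟨rfl, rfl, rfl⟩ :=
      eq_cut_of_Icc_subset_union ha' hQ.le hb'a hP.le hb (union_comm _ _ ▸ hcov)
    exact ⟨a, ⟨ha, hb'⟩, .inr ⟨rfl, rfl⟩⟩
  · exact absurd h hQ.not_ge

theorem ConnDiv.Complete.exists_cut {d : ConnDiv 2} (hc : d.Complete) :
    ∃ c ∈ Icc (0 : ℝ) 1, (d.pieces 0 = Ioo 0 c ∧ d.pieces 1 = Ioo c 1) ∨
      (d.pieces 0 = Ioo c 1 ∧ d.pieces 1 = Ioo 0 c) := by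
  obtain ⟨a, b, h0⟩ := d.isInterval 0
  obtain ⟨a', b', h1⟩ := d.isInterval 1
  have hcov : Icc 0 1 ⊆ closure (d.pieces 0) ∪ closure (d.pieces 1) := by
    intro x hx
    obtain ⟨i, hi⟩ := mem_iUnion.1 (hc hx)
    fin_cases i
    exacts [.inl hi, .inr hi]
  have hsub0 := d.subset 0
  have hsub1 := d.subset 1
  have hdisj := d.disj Fin.zero_ne_one
  simp only [h0, h1] at hcov hsub0 hsub1 hdisj ⊢
  exact exists_cut_of_disjoint_Ioo hsub0 hsub1 hdisj hcov

lemma measure_Ioo_lt_of_lt_left {μ : Measure ℝ} {a c m : ℝ} (hac : a ≤ c) (hcm : c < m)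
    (hfin : μ (Ioo a m) ≠ ∞) (hpos : 0 < μ (Ioo c m)) : μ (Ioo a c) < μ (Ioo a m) :=
  calc μ (Ioo a c)
      < μ (Ioo a c) + μ (Ioo c m) :=
        ENNReal.lt_add_right (measure_ne_top_of_subset (Ioo_subset_Ioo_right hcm.le) hfin) hpos.ne'
    _ = μ (Ioo a c ∪ Ioo c m) :=
        (measure_union (Ioo_disjoint_Ioo.2 (by simp)) measurableSet_Ioo).symm
    _ ≤ μ (Ioo a m) :=
        measure_mono (union_subset (Ioo_subset_Ioo_right hcm.le) (Ioo_subset_Ioo_left hac))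

lemma measure_Ioo_lt_of_lt_right {μ : Measure ℝ} {b c m : ℝ} (hmc : m < c) (hcb : c ≤ b)
    (hfin : μ (Ioo m b) ≠ ∞) (hpos : 0 < μ (Ioo m c)) : μ (Ioo c b) < μ (Ioo m b) :=
  calc μ (Ioo c b)
      < μ (Ioo c b) + μ (Ioo m c) :=
        ENNReal.lt_add_right (measure_ne_top_of_subset (Ioo_subset_Ioo_left hmc.le) hfin) hpos.ne'
    _ = μ (Ioo c b ∪ Ioo m c) :=
        (measure_union (Ioo_disjoint_Ioo.2 (by simp)) measurableSet_Ioo).symm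
    _ ≤ μ (Ioo m b) :=
        measure_mono (union_subset (Ioo_subset_Ioo_left hmc.le) (Ioo_subset_Ioo_right hcb))

structure IsStrictMedian (μ : Measure ℝ) (a m b : ℝ) : Prop where
  measure_Ioo_eq : μ (Ioo a m) = μ (Ioo m b)
  measure_Ioo_ne_top : μ (Ioo a m) ≠ ∞
  pos_left : ∀ x < m, 0 < μ (Ioo x m)
  pos_right : ∀ x, m < x → 0 < μ (Ioo m x)

namespace IsStrictMedian

variable {μ : Measure ℝ} {a m b c : ℝ}

theorem le_of_measure_le (h : IsStrictMedian μ a m b) (hac : a ≤ c)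
    (hle : μ (Ioo c b) ≤ μ (Ioo a c)) : m ≤ c := by
  by_contra! hcm
  have := measure_Ioo_lt_of_lt_left hac hcm h.measure_Ioo_ne_top (h.pos_left c hcm)
  refine (hle.trans_lt this).not_ge ?_
  rw [h.measure_Ioo_eq]
  exact measure_mono (Ioo_subset_Ioo_left hcm.le)

theorem ge_of_measure_le (h : IsStrictMedian μ a m b) (hcb : c ≤ b)
    (hle : μ (Ioo a c) ≤ μ (Ioo c b)) : c ≤ m := by
  by_contra! hmc
  have := measure_Ioo_lt_of_lt_right hmc hcb (h.measure_Ioo_eq ▸ h.measure_Ioo_ne_top)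
    (h.pos_right c hmc)
  refine (hle.trans_lt this).not_ge ?_
  rw [← h.measure_Ioo_eq]
  exact measure_mono (Ioo_subset_Ioo_right hmc.le)

end IsStrictMedian

lemma vA_Ioo {x y : ℝ} (hx : 0 ≤ x) (hy : y ≤ 1) : vA (Ioo x y) = ENNReal.ofReal (y - x) := by
  rw [vA, Measure.restrict_apply measurableSet_Ioo,
    inter_eq_left.2 (Ioo_subset_Icc_self.trans (Icc_subset_Icc hx hy)), Real.volume_Ioo]

lemma unifOn_Ioo (a b m x y : ℝ) :
    unifOn a b m (Ioo x y) =
      ENNReal.ofReal (m / (b - a)) * ENNReal.ofReal (min y b - max x a) := by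
  rw [unifOn, Measure.smul_apply, smul_eq_mul, Measure.restrict_apply measurableSet_Ioo,
    Ioo_inter_Ioo, Real.volume_Ioo]

lemma ENNReal.ofReal_one_half : ENNReal.ofReal (1 / 2) = 2⁻¹ := by
  rw [one_div, ENNReal.ofReal_inv_of_pos two_pos, ENNReal.ofReal_ofNat]

lemma vA_Ioo_zero_half : vA (Ioo 0 (1 / 2)) = 2⁻¹ := by
  rw [vA_Ioo le_rfl (by norm_num), sub_zero, ENNReal.ofReal_one_half]

lemma vA_Ioo_half_one : vA (Ioo (1 / 2) 1) = 2⁻¹ := by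
  rw [vA_Ioo (by norm_num) le_rfl, show (1 : ℝ) - 1 / 2 = 1 / 2 by norm_num,
    ENNReal.ofReal_one_half]

lemma isStrictMedian_vA : IsStrictMedian vA 0 (1 / 2) 1 where
  measure_Ioo_eq := vA_Ioo_zero_half.trans vA_Ioo_half_one.symm
  measure_Ioo_ne_top := by
    rw [vA_Ioo_zero_half]
    simp
  pos_left x hx := by
    refine (measure_mono (Ioo_subset_Ioo_left (le_max_left x 0))).trans_lt' ?_
    rw [vA_Ioo (le_max_right x 0) (by norm_num), ENNReal.ofReal_pos, sub_pos, max_lt_iff]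
    exact ⟨hx, by norm_num⟩
  pos_right x hx := by
    refine (measure_mono (Ioo_subset_Ioo_right (min_le_left x 1))).trans_lt' ?_
    rw [vA_Ioo (by norm_num) (min_le_right x 1), ENNReal.ofReal_pos, sub_pos, lt_min_iff]
    exact ⟨hx, by norm_num⟩

lemma vB_Ioo {δ : ℝ} (hδ : 0 < δ) (x y : ℝ) :
    vB δ (Ioo x y) = ENNReal.ofReal ((min y (1 / 2 + δ) - max x (1 / 2 - δ)) / (2 * δ)) := by
  rw [vB, unifOn_Ioo, ← ENNReal.ofReal_mul (div_nonneg zero_le_one (by linarith))]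
  ring_nf

lemma vB_Ioo_half_left {δ x : ℝ} (hδ : 0 < δ) (hx : x ≤ 1 / 2 - δ) :
    vB δ (Ioo x (1 / 2)) = 2⁻¹ := by
  rw [vB_Ioo hδ, min_eq_left (by linarith), max_eq_right hx,
    show (1 / 2 - (1 / 2 - δ)) / (2 * δ) = 1 / 2 by field_simp; ring, ENNReal.ofReal_one_half]

lemma vB_Ioo_half_right {δ y : ℝ} (hδ : 0 < δ) (hy : 1 / 2 + δ ≤ y) :
    vB δ (Ioo (1 / 2) y) = 2⁻¹ := by
  rw [vB_Ioo hδ, min_eq_right hy, max_eq_left (by linarith),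
    show (1 / 2 + δ - 1 / 2) / (2 * δ) = 1 / 2 by field_simp; ring, ENNReal.ofReal_one_half]

lemma isStrictMedian_vB {δ : ℝ} (hδ : 0 < δ) (hδ' : δ < 1 / 2) :
    IsStrictMedian (vB δ) 0 (1 / 2) 1 where
  measure_Ioo_eq := by
    rw [vB_Ioo_half_left hδ (by linarith), vB_Ioo_half_right hδ (by linarith)]
  measure_Ioo_ne_top := by
    rw [vB_Ioo_half_left hδ (by linarith)]
    simp
  pos_left x hx := by
    rw [vB_Ioo hδ, ENNReal.ofReal_pos, min_eq_left (by linarith)]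
    exact div_pos (sub_pos.2 (max_lt hx (by linarith))) (by positivity)
  pos_right x hx := by
    rw [vB_Ioo hδ, ENNReal.ofReal_pos, max_eq_left (by linarith)]
    exact div_pos (sub_pos.2 (lt_min hx (by linarith))) (by positivity)

/-- The only envy-free complete connected division between Alice and Bob cuts
at the point `1/2` (with either assignment of the halves), and its utilitarian
welfare is exactly `1`. -/
theorem unique_envy_free_cut (δ : ℝ) (hδ : 0 < δ) (hδ' : δ < 1/2)
    (d : ConnDiv 2) (hc : d.Complete) (hEF : EnvyFree ![vA, vB δ] d) :
    ((d.pieces 0 = Set.Ioo (0:ℝ) (1/2) ∧ d.pieces 1 = Set.Ioo (1/2:ℝ) 1) ∨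
     (d.pieces 0 = Set.Ioo (1/2:ℝ) 1 ∧ d.pieces 1 = Set.Ioo (0:ℝ) (1/2))) ∧
    util ![vA, vB δ] d = 1 := by
  obtain ⟨c, ⟨hc0, hc1⟩, hcut⟩ := hc.exists_cut
  have hA : vA (d.pieces 1) ≤ vA (d.pieces 0) := hEF 0 1
  have hB : vB δ (d.pieces 0) ≤ vB δ (d.pieces 1) := hEF 1 0
  have hutil : util ![vA, vB δ] d = vA (d.pieces 0) + vB δ (d.pieces 1) := Fin.sum_univ_two _
  rcases hcut with ⟨h0, h1⟩ | ⟨h0, h1⟩ <;> rw [h0, h1] at hA hB hutil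
  · obtain rfl : c = 1 / 2 := le_antisymm ((isStrictMedian_vB hδ hδ').ge_of_measure_le hc1 hB)
      (isStrictMedian_vA.le_of_measure_le hc0 hA)
    refine ⟨.inl ⟨h0, h1⟩, ?_⟩
    rw [hutil, vA_Ioo_zero_half, vB_Ioo_half_right hδ (by linarith), ENNReal.inv_two_add_inv_two]
  · obtain rfl : c = 1 / 2 := le_antisymm (isStrictMedian_vA.ge_of_measure_le hc1 hA)
      ((isStrictMedian_vB hδ hδ').le_of_measure_le hc0 hB)
    refine ⟨.inr ⟨h0, h1⟩, ?_⟩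
    rw [hutil, vA_Ioo_half_one, vB_Ioo_half_left hδ (by linarith), ENNReal.inv_two_add_inv_two]
end
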